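/- Absorption of simulated summands: for a ∈ A^r, if q' ≲cc p' then a.p' + a.q' ≡cc a.p' (i.e., a.p' + a.q' ≲cc a.p' and a.p' ≲cc a.p' + a.q'); dually, for b ∈ A^l, if q' ≲cc p' then b.p' + b.q' ≡cc b.q'. -/
import Mathlib



/-- Process terms: `p ::= 0 | ω | a.p | p + p`. -/
inductive Proc (Act : Type) : Type where
  | nil : Proc Act
  | omega : Proc Act
  | act : Act → Proc Act → Proc Act
  | plus : Proc Act → Proc Act → Proc Act
deriving DecidableEq

/-- Operational semantics of process terms.  The parameter `isL : Act → Bool`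
describes the partition `A = A^l ⊎ A^r`: `isL a = true` means `a ∈ A^l`
(contravariant), `isL a = false` means `a ∈ A^r` (covariant). -/
inductive Step {Act : Type} (isL : Act → Bool) : Proc Act → Act → Proc Act → Prop where
  | omega {b : Act} : isL b = true → Step isL .omega b .omega
  | act {a : Act} {p : Proc Act} : Step isL (.act a p) a p
  | plusL {p q p' : Proc Act} {a : Act} : Step isL p a p' → Step isL (.plus p q) a p'
  | plusR {p q q' : Proc Act} {a : Act} : Step isL q a q' → Step isL (.plus p q) a q'

/-- A covariant-contravariant simulation over an LTS with state space `S`,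
actions `Act` partitioned by `isL` (`true` = contravariant `A^l`,
`false` = covariant `A^r`) and transition relation `tr`. -/
def IsCCSim {S Act : Type} (isL : Act → Bool) (tr : S → Act → S → Prop)
    (R : S → S → Prop) : Prop :=
  ∀ p q, R p q →
    ((∀ a, isL a = false → ∀ p', tr p a p' → ∃ q', tr q a q' ∧ R p' q') ∧
     (∀ b, isL b = true → ∀ q', tr q b q' → ∃ p', tr p b p' ∧ R p' q'))

/-- The covariant-contravariant simulation preorder `p ≲cc q` over an LTS. -/
def CCLE {S Act : Type} (isL : Act → Bool) (tr : S → Act → S → Prop) (p q : S) : Prop :=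
  ∃ R, IsCCSim isL tr R ∧ R p q

/-- `p ≲cc q` for process terms. -/
def ccle {Act : Type} (isL : Act → Bool) (p q : Proc Act) : Prop :=
  CCLE isL (Step isL) p q

lemma ccsim_or_eq {S Act : Type} {isL : Act → Bool} {tr : S → Act → S → Prop}
    {R : S → S → Prop} (hR : IsCCSim isL tr R) :
    IsCCSim isL tr (fun x y => R x y ∨ x = y) := by
  intro p q hpq
  rcases hpq with hpq | rfl
  · obtain ⟨h1, h2⟩ := hR p q hpq
    constructor
    · intro c hc p'' hs
      obtain ⟨q'', hq, hr⟩ := h1 c hc p'' hs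
      exact ⟨q'', hq, Or.inl hr⟩
    · intro c hc q'' hs
      obtain ⟨p'', hp, hr⟩ := h2 c hc q'' hs
      exact ⟨p'', hp, Or.inl hr⟩
  · exact ⟨fun c _ p'' hs => ⟨p'', hs, Or.inr rfl⟩,
           fun c _ q'' hs => ⟨q'', hs, Or.inr rfl⟩⟩

/-- Absorption of simulated summands: for `a ∈ A^r`, if `q' ≲cc p'` then
`a.p' + a.q' ≡cc a.p'`; dually, for `b ∈ A^l`, if `q' ≲cc p'` then
`b.p' + b.q' ≡cc b.q'`. -/
theorem absorption_of_simulated_summands {Act : Type} [Fintype Act]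
    (isL : Act → Bool) (a : Act) (ha : isL a = false) (b : Act) (hb : isL b = true)
    (p' q' : Proc Act) (h : ccle isL q' p') :
    (ccle isL (Proc.plus (Proc.act a p') (Proc.act a q')) (Proc.act a p') ∧
     ccle isL (Proc.act a p') (Proc.plus (Proc.act a p') (Proc.act a q'))) ∧
    (ccle isL (Proc.plus (Proc.act b p') (Proc.act b q')) (Proc.act b q') ∧
     ccle isL (Proc.act b q') (Proc.plus (Proc.act b p') (Proc.act b q'))) := by
  obtain ⟨R, hR, hqp⟩ := h
  have base := ccsim_or_eq hR
  refine ⟨⟨?_, ?_⟩, ?_, ?_⟩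
  · refine ⟨fun x y => (x = Proc.plus (Proc.act a p') (Proc.act a q') ∧ y = Proc.act a p')
      ∨ (R x y ∨ x = y), ?_, Or.inl ⟨rfl, rfl⟩⟩
    intro p q hpq
    rcases hpq with ⟨rfl, rfl⟩ | hpq
    · constructor
      · intro c hc p'' hs
        cases hs with
        | plusL h1 => cases h1; exact ⟨p', Step.act, Or.inr (Or.inr rfl)⟩
        | plusR h1 => cases h1; exact ⟨p', Step.act, Or.inr (Or.inl hqp)⟩
      · intro c hc q'' hs
        cases hs; rw [ha] at hc; exact absurd hc (by simp)
    · obtain ⟨h1, h2⟩ := base p q hpq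
      constructor
      · intro c hc p'' hs
        obtain ⟨q'', hq, hr⟩ := h1 c hc p'' hs
        exact ⟨q'', hq, Or.inr hr⟩
      · intro c hc q'' hs
        obtain ⟨p'', hp, hr⟩ := h2 c hc q'' hs
        exact ⟨p'', hp, Or.inr hr⟩
  · refine ⟨fun x y => (x = Proc.act a p' ∧ y = Proc.plus (Proc.act a p') (Proc.act a q'))
      ∨ (R x y ∨ x = y), ?_, Or.inl ⟨rfl, rfl⟩⟩
    intro p q hpq
    rcases hpq with ⟨rfl, rfl⟩ | hpq
    · constructor
      · intro c hc p'' hs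
        cases hs; exact ⟨p', Step.plusL Step.act, Or.inr (Or.inr rfl)⟩
      · intro c hc q'' hs
        cases hs with
        | plusL h1 => cases h1; rw [ha] at hc; exact absurd hc (by simp)
        | plusR h1 => cases h1; rw [ha] at hc; exact absurd hc (by simp)
    · obtain ⟨h1, h2⟩ := base p q hpq
      constructor
      · intro c hc p'' hs
        obtain ⟨q'', hq, hr⟩ := h1 c hc p'' hs
        exact ⟨q'', hq, Or.inr hr⟩
      · intro c hc q'' hs
        obtain ⟨p'', hp, hr⟩ := h2 c hc q'' hs
        exact ⟨p'', hp, Or.inr hr⟩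
  · refine ⟨fun x y => (x = Proc.plus (Proc.act b p') (Proc.act b q') ∧ y = Proc.act b q')
      ∨ (R x y ∨ x = y), ?_, Or.inl ⟨rfl, rfl⟩⟩
    intro p q hpq
    rcases hpq with ⟨rfl, rfl⟩ | hpq
    · constructor
      · intro c hc p'' hs
        cases hs with
        | plusL h1 => cases h1; rw [hb] at hc; exact absurd hc (by simp)
        | plusR h1 => cases h1; rw [hb] at hc; exact absurd hc (by simp)
      · intro c hc q'' hs
        cases hs; exact ⟨q', Step.plusR Step.act, Or.inr (Or.inr rfl)⟩
    · obtain ⟨h1, h2⟩ := base p q hpq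
      constructor
      · intro c hc p'' hs
        obtain ⟨q'', hq, hr⟩ := h1 c hc p'' hs
        exact ⟨q'', hq, Or.inr hr⟩
      · intro c hc q'' hs
        obtain ⟨p'', hp, hr⟩ := h2 c hc q'' hs
        exact ⟨p'', hp, Or.inr hr⟩
  · refine ⟨fun x y => (x = Proc.act b q' ∧ y = Proc.plus (Proc.act b p') (Proc.act b q'))
      ∨ (R x y ∨ x = y), ?_, Or.inl ⟨rfl, rfl⟩⟩
    intro p q hpq
    rcases hpq with ⟨rfl, rfl⟩ | hpq
    · constructor
      · intro c hc p'' hs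
        cases hs; rw [hb] at hc; exact absurd hc (by simp)
      · intro c hc q'' hs
        cases hs with
        | plusL h1 => cases h1; exact ⟨q', Step.act, Or.inr (Or.inl hqp)⟩
        | plusR h1 => cases h1; exact ⟨q', Step.act, Or.inr (Or.inr rfl)⟩
    · obtain ⟨h1, h2⟩ := base p q hpq
      constructor
      · intro c hc p'' hs
        obtain ⟨q'', hq, hr⟩ := h1 c hc p'' hs
        exact ⟨q'', hq, Or.inr hr⟩
      · intro c hc q'' hs
        obtain ⟨p'', hp, hr⟩ := h2 c hc q'' hs
        exact ⟨p'', hp, Or.inr hr⟩
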